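/- arXiv:2201.10825 — 5 statements merged into one kernel-verified Lean document; each statement's English description precedes it below -/
import Mathlib

section
/- Any strategy induced by a Mealy machine with randomised initialisation but deterministic outputs and deterministic updates (an RDD strategy) in a game assigns positive probability to at least one infinite play, provided the game's transition function is deterministic. Hence there is no RDD strategy outcome-equivalent to the uniform coin-flipping strategy in the one-state two-action game. -/
/-!
The pure strategy fixed by an initial memory `m0` of positive weight produces a single play,
and every cylinder around that play contains `m0`. The cylinder probabilities therefore
decrease to a limit of at least `init m0 > 0`, whereas for the coin-flipping strategy they
are `(1/2)^k → 0`.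
-/

open Filter
open scoped Classical

/-- A Mealy machine with randomised initialisation and deterministic outputs
and updates (RDD), with memory `Fin n`. -/
structure RDDMachine (n : ℕ) (S A : Type) where
  init : Fin n → ℝ
  next : Fin n → S → A
  up : Fin n → S → A → Fin n

/-- One step of the deterministic dynamics of an RDD machine in a game with
deterministic transition function `trans`. -/
def confStep {n : ℕ} {S A : Type} (trans : S → A → S) (N : RDDMachine n S A) :
    Fin n × S → Fin n × S :=
  fun p => (N.up p.1 p.2 (N.next p.1 p.2), trans p.2 (N.next p.1 p.2))

/-- The unique play (sequence of state/action pairs) generated by the pure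
finite-memory strategy obtained by fixing initial memory `m0`. -/
def playOf {n : ℕ} {S A : Type} (trans : S → A → S) (N : RDDMachine n S A)
    (m0 : Fin n) (s0 : S) (k : ℕ) : S × A :=
  (((confStep trans N)^[k] (m0, s0)).2,
    N.next ((confStep trans N)^[k] (m0, s0)).1 ((confStep trans N)^[k] (m0, s0)).2)

/-- Probability, under the RDD machine's induced measure (the `init`-mixture of
Dirac measures on the plays of its pure strategies), of the cylinder of the
first `k` steps of the play `π`. -/
noncomputable def cylMeas {n : ℕ} {S A : Type} (trans : S → A → S)
    (N : RDDMachine n S A) (s0 : S) (π : ℕ → S × A) (k : ℕ) : ℝ :=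
  ∑ m0 ∈ Finset.univ.filter (fun m0 : Fin n => ∀ i < k, playOf trans N m0 s0 i = π i),
    N.init m0

section Cylinders

variable {n : ℕ} {S A : Type} (trans : S → A → S) (N : RDDMachine n S A) (s0 : S)

theorem cylMeas_antitone (h0 : ∀ m, 0 ≤ N.init m) (π : ℕ → S × A) :
    Antitone (cylMeas trans N s0 π) := by
  intro j k hjk
  refine Finset.sum_le_sum_of_subset_of_nonneg ?_ fun m _ _ => h0 m
  exact Finset.monotone_filter_right _ fun _ _ hm i hi => hm i (hi.trans_le hjk)

theorem init_le_cylMeas_playOf (h0 : ∀ m, 0 ≤ N.init m) (m0 : Fin n) (k : ℕ) :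
    N.init m0 ≤ cylMeas trans N s0 (playOf trans N m0 s0) k :=
  Finset.single_le_sum (fun m _ => h0 m) (by simp)

theorem exists_tendsto_cylMeas_playOf_ge (h0 : ∀ m, 0 ≤ N.init m) (m0 : Fin n) :
    ∃ L, N.init m0 ≤ L ∧
      Tendsto (cylMeas trans N s0 (playOf trans N m0 s0)) atTop (nhds L) :=
  ⟨_, le_ciInf (init_le_cylMeas_playOf trans N s0 h0 m0),
    tendsto_atTop_ciInf (cylMeas_antitone trans N s0 h0 _)
      ⟨N.init m0, Set.forall_mem_range.2 (init_le_cylMeas_playOf trans N s0 h0 m0)⟩⟩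

theorem exists_play_tendsto_cylMeas_pos (h0 : ∀ m, 0 ≤ N.init m) (h1 : ∑ m, N.init m = 1) :
    ∃ (π : ℕ → S × A) (L : ℝ), 0 < L ∧ Tendsto (cylMeas trans N s0 π) atTop (nhds L) := by
  obtain ⟨m0, -, hm0⟩ : ∃ m0 ∈ Finset.univ, (0 : ℝ) < N.init m0 :=
    Finset.exists_lt_of_sum_lt (by simp [h1])
  obtain ⟨L, hL, hlim⟩ := exists_tendsto_cylMeas_playOf_ge trans N s0 h0 m0
  exact ⟨_, L, hm0.trans_le hL, hlim⟩

end Cylinders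

/-- (i) In any game with deterministic transitions, the measure induced by an
RDD strategy assigns positive probability to at least one single play (the
probability of a singleton being the limit of the cylinder probabilities).
(ii) Hence no RDD strategy is outcome-equivalent to the uniform coin-flipping
strategy in the one-state two-action game, whose cylinders of depth `k` all
have probability `(1/2)^k`. -/
theorem rdd_has_positive_play_and_cannot_coinflip :
    (∀ (S A : Type) (trans : S → A → S) (n : ℕ) (N : RDDMachine n S A),
      (∀ m, 0 ≤ N.init m) → (∑ m, N.init m) = 1 → ∀ s0 : S,
        ∃ (π : ℕ → S × A) (L : ℝ), 0 < L ∧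
          Tendsto (cylMeas trans N s0 π) atTop (nhds L)) ∧
    ¬ ∃ (n : ℕ) (N : RDDMachine n Unit Bool),
        (∀ m, 0 ≤ N.init m) ∧ (∑ m, N.init m) = 1 ∧
        ∀ (π : ℕ → Unit × Bool) (k : ℕ),
          cylMeas (fun _ _ => ()) N () π k = (1 / 2 : ℝ) ^ k := by
  refine ⟨fun S A trans n N h0 h1 s0 => exists_play_tendsto_cylMeas_pos trans N s0 h0 h1, ?_⟩
  rintro ⟨n, N, h0, h1, hcoin⟩
  obtain ⟨π, L, hL, hlim⟩ := exists_play_tendsto_cylMeas_pos (fun _ _ => ()) N () h0 h1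
  have hzero : Tendsto (cylMeas (fun _ _ => ()) N () π) atTop (nhds 0) := by
    simpa only [funext (hcoin π)] using
      tendsto_pow_atTop_nhds_zero_of_lt_one (by norm_num : (0 : ℝ) ≤ 1 / 2) (by norm_num)
  exact hL.ne' (tendsto_nhds_unique hlim hzero)
end

section
/- For every RDD strategy (Mealy machine with randomised initialisation, deterministic outputs, deterministic updates) of Player 1 in a stochastic game, there exists an outcome-equivalent DRD strategy (Mealy machine with deterministic initialisation, randomised outputs, deterministic updates). Moreover, the constructed DRD machine has at most (|M|+1)^{|supp(μ_init)|} memory states, where M is the memory state set of the RDD machine. -/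
open scoped Classical

/-- A two-player stochastic game with state set `S` (partitioned by `P1`),
action set `A`, and probabilistic transition function `delta`. -/
structure Game (S A : Type) [Fintype S] [Fintype A] where
  P1 : S → Bool
  delta : S → A → S → ℝ
  delta_nonneg : ∀ s a s', 0 ≤ delta s a s'
  delta_sum : ∀ s a, ∑ s', delta s a s' = 1

variable {S A : Type} [Fintype S] [Fintype A]

/-- A (behavioural) strategy assigns to every word `w ∈ (S×A)*` and current
state a probability distribution over actions. -/
def IsStrategy (σ : List (S × A) → S → A → ℝ) : Prop :=
  (∀ w s a, 0 ≤ σ w s a) ∧ ∀ w s, ∑ a, σ w s a = 1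

/-- Probability of the cylinder of the history starting in `s0` and following
`steps`, under Player 1 strategy `σ1` and Player 2 strategy `σ2`. -/
def histProb (G : Game S A) (σ1 σ2 : List (S × A) → S → A → ℝ) (s0 : S)
    (steps : List (A × S)) : ℝ :=
  (steps.foldl
    (fun (acc : ℝ × S × List (S × A)) (p : A × S) =>
      (acc.1 * (if G.P1 acc.2.1 then σ1 acc.2.2 acc.2.1 p.1 else σ2 acc.2.2 acc.2.1 p.1)
          * G.delta acc.2.1 p.1 p.2,
        p.2, acc.2.2 ++ [(acc.2.1, p.1)]))
    ((1 : ℝ), s0, ([] : List (S × A)))).1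

/-- Two Player-1 strategies are outcome-equivalent if they induce the same
probability of every cylinder, against every Player-2 strategy and from every
initial state. -/
def OutcomeEquiv (G : Game S A) (σ τ : List (S × A) → S → A → ℝ) : Prop :=
  ∀ σ2, IsStrategy σ2 → ∀ s0 steps, histProb G σ σ2 s0 steps = histProb G τ σ2 s0 steps

/-- The steps form a genuine history: all transitions have positive probability. -/
def validHist (G : Game S A) : S → List (A × S) → Prop
  | _, [] => True
  | s, (a, s') :: rest => 0 < G.delta s a s' ∧ validHist G s' rest

/-- Consistency of a history with a Player-1 strategy: every action chosen at a
Player-1 state has positive probability. -/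
def consistentFrom (G : Game S A) (σ : List (S × A) → S → A → ℝ) :
    List (S × A) → S → List (A × S) → Prop
  | _, _, [] => True
  | w, s, (a, s') :: rest =>
      (G.P1 s = true → 0 < σ w s a) ∧ consistentFrom G σ (w ++ [(s, a)]) s' rest

/-- The word `w ∈ (S×A)*` and last state of the history `(s0, steps)`. -/
def histWord (s0 : S) (steps : List (A × S)) : List (S × A) × S :=
  steps.foldl (fun acc p => (acc.1 ++ [(acc.2, p.1)], p.2)) (([] : List (S × A)), s0)
/-- A stochastic Mealy machine with memory `Fin n`. -/
structure Mealy (n : ℕ) (S A : Type) where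
  init : Fin n → ℝ
  next : Fin n → S → A → ℝ
  up : Fin n → S → A → Fin n → ℝ

def ProperMealy {n : ℕ} (N : Mealy n S A) : Prop :=
  (∀ m, 0 ≤ N.init m) ∧ (∑ m, N.init m) = 1 ∧
  (∀ m s a, 0 ≤ N.next m s a) ∧ (∀ m s, ∑ a, N.next m s a = 1) ∧
  (∀ m s a m', 0 ≤ N.up m s a m') ∧ ∀ m s a, ∑ m', N.up m s a m' = 1

def IsDirac {α : Type} (μ : α → ℝ) : Prop := ∃ x, ∀ y, μ y = if y = x then 1 else 0

/-- Deterministic initialisation. -/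
def DetInit {n : ℕ} (N : Mealy n S A) : Prop := IsDirac N.init
/-- Deterministic outputs. -/
def DetNext {n : ℕ} (N : Mealy n S A) : Prop := ∀ m s, IsDirac (N.next m s)
/-- Deterministic updates. -/
def DetUp {n : ℕ} (N : Mealy n S A) : Prop := ∀ m s a, IsDirac (N.up m s a)

/-- One-step (Bayesian) update of the distribution over memory states upon
reading the pair `(s, a)`. -/
noncomputable def stepDist (G : Game S A) {n : ℕ} (N : Mealy n S A)
    (μ : Fin n → ℝ) (s : S) (a : A) : Fin n → ℝ :=
  if G.P1 s = true ∧ (∑ m', μ m' * N.next m' s a) ≠ 0 then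
    fun m => (∑ m', μ m' * N.up m' s a m * N.next m' s a) / (∑ m', μ m' * N.next m' s a)
  else fun m => ∑ m', μ m' * N.up m' s a m

/-- Distribution over memory states after the machine processes `w`. -/
noncomputable def memDist (G : Game S A) {n : ℕ} (N : Mealy n S A)
    (w : List (S × A)) : Fin n → ℝ :=
  w.foldl (fun μ p => stepDist G N μ p.1 p.2) N.init

/-- The strategy induced by a stochastic Mealy machine. -/
noncomputable def mealyStrat (G : Game S A) {n : ℕ} (N : Mealy n S A)
    (w : List (S × A)) (s : S) (a : A) : ℝ :=
  ∑ m, memDist G N w m * N.next m s a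

/-!
With deterministic outputs and updates, the randomness of an RDD machine lies entirely in the
choice of its initial memory state `m₀`: from each `m₀` the machine runs deterministically. After a
history, Player 1's posterior over memory states is therefore the push-forward of `μ_init`,
restricted to those `m₀` whose run agrees with every action Player 1 has played, and normalised.
This finite information — for each `m₀` in the support, its current memory state or "ruled out" —
is updated deterministically, so a DRD machine can track it and play the posterior mixture of the
RDD machine's outputs. Both strategies then agree on every history of positive probability.
-/

open Finset

section OutcomeEquivalence

variable (G : Game S A) (σ₁ σ₂ : List (S × A) → S → A → ℝ)

def histStep (acc : ℝ × S × List (S × A)) (p : A × S) : ℝ × S × List (S × A) :=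
  (acc.1 * (if G.P1 acc.2.1 then σ₁ acc.2.2 acc.2.1 p.1 else σ₂ acc.2.2 acc.2.1 p.1)
      * G.delta acc.2.1 p.1 p.2, p.2, acc.2.2 ++ [(acc.2.1, p.1)])

theorem histProb_eq_foldl_histStep (s₀ : S) (steps : List (A × S)) :
    histProb G σ₁ σ₂ s₀ steps = (steps.foldl (histStep G σ₁ σ₂) (1, s₀, [])).1 :=
  rfl

theorem foldl_histStep_fst (steps : List (A × S)) (c : ℝ) (s : S) (w : List (S × A)) :
    (steps.foldl (histStep G σ₁ σ₂) (c, s, w)).1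
      = c * (steps.foldl (histStep G σ₁ σ₂) (1, s, w)).1 := by
  induction steps generalizing c s w with
  | nil => simp
  | cons p steps ih =>
    simp only [List.foldl_cons, histStep]
    rw [ih, ih (1 * _ * _)]
    ring

/-- Outcome equivalence only requires agreement on an invariant set of words that contains
every history of positive probability. -/
theorem outcomeEquiv_of_invariant (σ τ : List (S × A) → S → A → ℝ)
    (P : List (S × A) → Prop) (h_nil : P [])
    (h_append : ∀ w s a, P w → (G.P1 s = true → σ w s a ≠ 0) → P (w ++ [(s, a)]))
    (h_agree : ∀ w s a, P w → G.P1 s = true → σ w s a = τ w s a) :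
    OutcomeEquiv G σ τ := by
  intro σ₂ _ s₀ steps
  rw [histProb_eq_foldl_histStep, histProb_eq_foldl_histStep]
  suffices key : ∀ (c : ℝ) (s : S) (w : List (S × A)), P w →
      (steps.foldl (histStep G σ σ₂) (c, s, w)).1 = (steps.foldl (histStep G τ σ₂) (c, s, w)).1
    from key 1 s₀ [] h_nil
  induction steps with
  | nil => intro c s w _; rfl
  | cons p steps ih =>
    intro c s w hw
    obtain ⟨a, s'⟩ := p
    have h_move : (if G.P1 s then σ w s a else σ₂ w s a)
        = (if G.P1 s then τ w s a else σ₂ w s a) := by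
      split_ifs with hs
      exacts [h_agree w s a hw hs, rfl]
    simp only [List.foldl_cons, histStep]
    rw [h_move, foldl_histStep_fst, foldl_histStep_fst G τ]
    by_cases h_zero : (if G.P1 s then τ w s a else σ₂ w s a) = 0
    · simp [h_zero]
    · refine congrArg _ (ih 1 s' _ (h_append w s a hw fun hs => ?_))
      rw [h_agree w s a hw hs]
      simpa [hs] using h_zero

end OutcomeEquivalence

section UnnormalisedPosterior

variable (G : Game S A) {n : ℕ} (N : Mealy n S A)

noncomputable def normalized {ι : Type} [Fintype ι] (ν : ι → ℝ) : ι → ℝ := fun i => ν i / ∑ j, ν j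

noncomputable def weightStep (ν : Fin n → ℝ) (s : S) (a : A) : Fin n → ℝ :=
  fun m => ∑ m', ν m' * N.up m' s a m * (if G.P1 s then N.next m' s a else 1)

/-- The probability that `N` is in memory state `m` after `w` and has played every action of
Player 1 in `w`; on histories of positive probability, `memDist` is its normalisation. -/
noncomputable def memWeight (w : List (S × A)) : Fin n → ℝ :=
  w.foldl (fun ν p => weightStep G N ν p.1 p.2) N.init

theorem memDist_append_singleton (w : List (S × A)) (s : S) (a : A) :
    memDist G N (w ++ [(s, a)]) = stepDist G N (memDist G N w) s a := by
  simp [memDist, List.foldl_append]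

theorem memWeight_append_singleton (w : List (S × A)) (s : S) (a : A) :
    memWeight G N (w ++ [(s, a)]) = weightStep G N (memWeight G N w) s a := by
  simp [memWeight, List.foldl_append]

def MemDistNormalizes (w : List (S × A)) : Prop :=
  ∑ m, memWeight G N w m ≠ 0 ∧ memDist G N w = normalized (memWeight G N w)

variable {N}

theorem sum_weightStep (hup : ∀ m s a, ∑ m', N.up m s a m' = 1) (ν : Fin n → ℝ) (s : S) (a : A) :
    ∑ m, weightStep G N ν s a m = ∑ m, ν m * (if G.P1 s then N.next m s a else 1) := by
  simp only [weightStep]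
  rw [sum_comm]
  refine sum_congr rfl fun m _ => ?_
  rw [← sum_mul, ← mul_sum, hup, mul_one]

theorem stepDist_normalized (hup : ∀ m s a, ∑ m', N.up m s a m' = 1) (ν : Fin n → ℝ)
    (s : S) (a : A) (hν : ∑ m, ν m ≠ 0) (hstep : ∑ m, weightStep G N ν s a m ≠ 0) :
    stepDist G N (normalized ν) s a = normalized (weightStep G N ν s a) := by
  have h_total := sum_weightStep G hup ν s a
  have h_pull : ∀ f : Fin n → ℝ, ∑ m', normalized ν m' * f m' = (∑ m', ν m' * f m') / ∑ j, ν j :=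
    fun f => by simp only [normalized, div_mul_eq_mul_div, ← sum_div]
  funext m
  by_cases hs : G.P1 s = true
  · simp only [hs, if_true] at h_total
    have h_num := h_pull fun m' => N.up m' s a m * N.next m' s a
    simp only [← mul_assoc] at h_num
    rw [stepDist, if_pos ⟨hs, by rw [h_pull]; exact div_ne_zero (h_total ▸ hstep) hν⟩, h_num,
      h_pull, div_div_div_cancel_right₀ hν, normalized, h_total]
    simp only [weightStep, hs, if_true]
  · simp only [hs, Bool.false_eq_true, if_false, mul_one] at h_total
    rw [stepDist, if_neg (fun h => hs h.1), h_pull, normalized, h_total]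
    simp only [weightStep, hs, Bool.false_eq_true, if_false, mul_one]

theorem memDistNormalizes_nil (hinit : ∑ m, N.init m = 1) : MemDistNormalizes G N [] :=
  ⟨by simp [memWeight, hinit], by funext m; simp [memDist, memWeight, normalized, hinit]⟩

theorem MemDistNormalizes.append_singleton (hup : ∀ m s a, ∑ m', N.up m s a m' = 1)
    {w : List (S × A)} (h : MemDistNormalizes G N w) (s : S) (a : A)
    (hpos : G.P1 s = true → mealyStrat G N w s a ≠ 0) :
    MemDistNormalizes G N (w ++ [(s, a)]) := by
  have hstep : ∑ m, weightStep G N (memWeight G N w) s a m ≠ 0 := by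
    rw [sum_weightStep G hup]
    by_cases hs : G.P1 s = true
    · have h_strat : mealyStrat G N w s a
          = (∑ m, memWeight G N w m * N.next m s a) / ∑ m, memWeight G N w m := by
        simp only [mealyStrat, h.2, normalized, div_mul_eq_mul_div, ← sum_div]
      simp only [hs, if_true]
      exact fun h0 => hpos hs (by rw [h_strat, h0, zero_div])
    · simpa [hs] using h.1
  refine ⟨by rwa [memWeight_append_singleton], ?_⟩
  rw [memDist_append_singleton, h.2, stepDist_normalized G hup _ s a h.1 hstep,
    memWeight_append_singleton]

theorem outcomeEquiv_mealyStrat_of_eq_posterior (hN : ProperMealy N)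
    (τ : List (S × A) → S → A → ℝ)
    (hτ : ∀ w s a, ∑ m, memWeight G N w m ≠ 0 → G.P1 s = true →
      τ w s a = ∑ m, normalized (memWeight G N w) m * N.next m s a) :
    OutcomeEquiv G (mealyStrat G N) τ :=
  outcomeEquiv_of_invariant G _ τ (MemDistNormalizes G N) (memDistNormalizes_nil G hN.2.1)
    (fun _ s a h => h.append_singleton G hN.2.2.2.2.2 s a)
    (fun w s a h hs => by rw [hτ w s a h.1 hs, mealyStrat, h.2])

end UnnormalisedPosterior

theorem stepDist_indicator (G : Game S A) {n : ℕ} (N : Mealy n S A) (x : Fin n) (s : S) (a : A) :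
    stepDist G N (fun m => if m = x then 1 else 0) s a = N.up x s a := by
  funext m
  unfold stepDist
  split_ifs with h
  · simp only [ite_mul, one_mul, zero_mul, sum_ite_eq', mem_univ, if_true] at h ⊢
    rw [mul_div_assoc, div_self h.2, mul_one]
  · simp only [ite_mul, one_mul, zero_mul, sum_ite_eq', mem_univ, if_true]

namespace Mealy

variable {S A : Type} {T : Type} [Fintype T] (t₀ : T) (δ : T → S → A → T) (out : T → S → A → ℝ)

noncomputable def ofAutomaton : Mealy (Fintype.card T) S A where
  init i := if i = Fintype.equivFin T t₀ then 1 else 0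
  next i s a := out ((Fintype.equivFin T).symm i) s a
  up i s a j := if j = Fintype.equivFin T (δ ((Fintype.equivFin T).symm i) s a) then 1 else 0

theorem detInit_ofAutomaton : DetInit (ofAutomaton t₀ δ out) :=
  ⟨Fintype.equivFin T t₀, fun _ => by simp [ofAutomaton]⟩

theorem detUp_ofAutomaton : DetUp (ofAutomaton t₀ δ out) :=
  fun i s a => ⟨Fintype.equivFin T (δ ((Fintype.equivFin T).symm i) s a),
    fun _ => by simp [ofAutomaton]⟩

theorem properMealy_ofAutomaton [Fintype A] (h_nonneg : ∀ t s a, 0 ≤ out t s a)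
    (h_sum : ∀ t s, ∑ a, out t s a = 1) : ProperMealy (ofAutomaton t₀ δ out) := by
  refine ⟨fun _ => ?_, ?_, fun _ _ _ => h_nonneg _ _ _, fun _ _ => h_sum _ _,
    fun _ _ _ _ => ?_, fun _ _ _ => ?_⟩ <;> simp only [ofAutomaton]
  · split_ifs <;> norm_num
  · simp
  · split_ifs <;> norm_num
  · simp

variable [Fintype S] [Fintype A]

theorem memDist_ofAutomaton (G : Game S A) (w : List (S × A)) :
    memDist G (ofAutomaton t₀ δ out) w
      = fun i => if i = Fintype.equivFin T (w.foldl (fun t p => δ t p.1 p.2) t₀) then 1 else 0 := by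
  induction w using List.reverseRecOn with
  | nil => rfl
  | append_singleton w p ih =>
    rw [memDist_append_singleton, ih, stepDist_indicator, List.foldl_append, List.foldl_cons,
      List.foldl_nil]
    funext j
    simp only [ofAutomaton, Equiv.symm_apply_apply]

theorem mealyStrat_ofAutomaton (G : Game S A) (w : List (S × A)) (s : S) (a : A) :
    mealyStrat G (ofAutomaton t₀ δ out) w s a = out (w.foldl (fun t p => δ t p.1 p.2) t₀) s a := by
  rw [mealyStrat, memDist_ofAutomaton]
  simp [ofAutomaton]

end Mealy

section Belief

variable {S A : Type} {n : ℕ} {N : Mealy n S A}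

noncomputable def DetNext.act (h : DetNext N) (m : Fin n) (s : S) : A :=
  (h m s).choose

theorem DetNext.next_eq (h : DetNext N) (m : Fin n) (s : S) (a : A) :
    N.next m s a = if a = h.act m s then 1 else 0 :=
  (h m s).choose_spec a

noncomputable def DetUp.target (h : DetUp N) (m : Fin n) (s : S) (a : A) : Fin n :=
  (h m s a).choose

theorem DetUp.up_eq (h : DetUp N) (m : Fin n) (s : S) (a : A) (m' : Fin n) :
    N.up m s a m' = if m' = h.target m s a then 1 else 0 := by
  rw [(h m s a).choose_spec m']
  congr

/-- For each initial memory state `m₀` in the support of `N.init`: the current memory state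
of the run of `N` from `m₀`, or `none` once that run has disagreed with an action of Player 1. -/
abbrev Belief (N : Mealy n S A) : Type := {m₀ : Fin n // 0 < N.init m₀} → Option (Fin n)

def beliefInit : Belief N := fun m₀ => some m₀

noncomputable def beliefWeight (f : Belief N) (m : Fin n) : ℝ :=
  ∑ m₀, if f m₀ = some m then N.init m₀ else 0

theorem beliefWeight_nonneg (f : Belief N) (m : Fin n) : 0 ≤ beliefWeight f m :=
  sum_nonneg fun m₀ _ => by split_ifs; exacts [m₀.2.le, le_rfl]

theorem beliefWeight_beliefInit (hinit : ∀ m, 0 ≤ N.init m) :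
    beliefWeight (beliefInit (N := N)) = N.init := by
  funext m
  simp only [beliefWeight, beliefInit, Option.some.injEq]
  by_cases hm : 0 < N.init m
  · rw [sum_eq_single_of_mem ⟨m, hm⟩ (mem_univ _) fun m₀ _ hne => if_neg fun h => hne
      (Subtype.ext h), if_pos rfl]
  · rw [sum_eq_zero fun m₀ _ => if_neg fun (h : m₀.1 = m) => hm (h ▸ m₀.2)]
    exact (le_antisymm (not_lt.mp hm) (hinit m)).symm

/-- Normalised `beliefWeight`, with `N.init` as a fallback on beliefs of weight zero, which
only arise after histories of probability zero. -/
noncomputable def beliefPosterior (f : Belief N) : Fin n → ℝ :=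
  if ∑ m, beliefWeight f m = 0 then N.init else normalized (beliefWeight f)

theorem beliefPosterior_nonneg (hinit : ∀ m, 0 ≤ N.init m) (f : Belief N) (m : Fin n) :
    0 ≤ beliefPosterior f m := by
  unfold beliefPosterior normalized
  split_ifs
  exacts [hinit m,
    div_nonneg (beliefWeight_nonneg f m) (sum_nonneg fun m _ => beliefWeight_nonneg f m)]

theorem sum_beliefPosterior (hinit : ∑ m, N.init m = 1) (f : Belief N) :
    ∑ m, beliefPosterior f m = 1 := by
  unfold beliefPosterior normalized
  split_ifs with h
  exacts [hinit, by rw [← sum_div, div_self h]]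

theorem card_belief :
    Fintype.card (Belief N) = (n + 1) ^ (univ.filter fun m => 0 < N.init m).card := by
  rw [Fintype.card_fun, Fintype.card_option, Fintype.card_fin, Fintype.card_subtype]

end Belief

section BeliefAutomaton

variable (G : Game S A) {n : ℕ} {N : Mealy n S A} (hnext : DetNext N) (hup : DetUp N)

noncomputable def beliefStep (f : Belief N) (s : S) (a : A) : Belief N :=
  fun m₀ => (f m₀).bind fun m =>
    if G.P1 s = true ∧ a ≠ hnext.act m s then none else some (hup.target m s a)

theorem beliefWeight_beliefStep (f : Belief N) (s : S) (a : A) :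
    beliefWeight (beliefStep G hnext hup f s a) = weightStep G N (beliefWeight f) s a := by
  funext m
  simp only [beliefWeight, weightStep, sum_mul, ite_mul, zero_mul]
  rw [sum_comm]
  refine sum_congr rfl fun m₀ _ => ?_
  cases hf : f m₀ with
  | none => simp [beliefStep, hf]
  | some x =>
    rw [sum_eq_single_of_mem x (mem_univ _)
        fun m' _ hne => if_neg fun h => hne (Option.some_injective _ h).symm,
      if_pos rfl, hup.up_eq, hnext.next_eq]
    by_cases hs : G.P1 s = true <;> by_cases ha : a = hnext.act x s <;>
      simp [beliefStep, hf, hs, ha, eq_comm]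

theorem beliefWeight_foldl_beliefStep (hinit : ∀ m, 0 ≤ N.init m) (w : List (S × A)) :
    beliefWeight (w.foldl (fun f p => beliefStep G hnext hup f p.1 p.2) beliefInit)
      = memWeight G N w := by
  induction w using List.reverseRecOn with
  | nil => exact beliefWeight_beliefInit hinit
  | append_singleton w p ih =>
    rw [List.foldl_append, List.foldl_cons, List.foldl_nil, beliefWeight_beliefStep, ih,
      memWeight_append_singleton]

noncomputable def drdOfRdd : Mealy (Fintype.card (Belief N)) S A :=
  Mealy.ofAutomaton beliefInit (beliefStep G hnext hup)
    fun f s a => ∑ m, beliefPosterior f m * N.next m s a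

theorem properMealy_drdOfRdd (hN : ProperMealy N) : ProperMealy (drdOfRdd G hnext hup) := by
  obtain ⟨hinit, hinit_sum, hnext_nonneg, hnext_sum, -, -⟩ := hN
  refine Mealy.properMealy_ofAutomaton _ _ _ (fun f s a => ?_) (fun f s => ?_)
  · exact sum_nonneg fun m _ => mul_nonneg (beliefPosterior_nonneg hinit f m) (hnext_nonneg m s a)
  · rw [sum_comm]
    simp only [← mul_sum, hnext_sum, mul_one, sum_beliefPosterior hinit_sum]

end BeliefAutomaton

/-- Every RDD strategy (randomised initialisation, deterministic outputs and
updates) admits an outcome-equivalent DRD strategy (deterministic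
initialisation and updates, randomised outputs), with at most
`(|M|+1)^|supp(μ_init)|` memory states. -/
theorem rdd_subset_drd (S A : Type) [Fintype S] [Fintype A]
    (G : Game S A) (n : ℕ) (N : Mealy n S A) (hN : ProperMealy N)
    (hnext : DetNext N) (hup : DetUp N) :
    ∃ (k : ℕ) (B : Mealy k S A), ProperMealy B ∧ DetInit B ∧ DetUp B ∧
      OutcomeEquiv G (mealyStrat G N) (mealyStrat G B) ∧
      k ≤ (n + 1) ^ (Finset.univ.filter fun m => 0 < N.init m).card := by
  refine ⟨_, drdOfRdd G hnext hup, properMealy_drdOfRdd G hnext hup hN,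
    Mealy.detInit_ofAutomaton _ _ _, Mealy.detUp_ofAutomaton _ _ _, ?_, card_belief.le⟩
  refine outcomeEquiv_mealyStrat_of_eq_posterior G hN _ fun w s a hw _ => ?_
  simp only [drdOfRdd, Mealy.mealyStrat_ofAutomaton, beliefPosterior,
    beliefWeight_foldl_beliefStep G hnext hup hN.1, if_neg hw]
end

section
/- For every RRR strategy (fully randomised Mealy machine) M of Player i in a stochastic game, there exists an outcome-equivalent DRR strategy (deterministic initialisation, randomised outputs and updates) B with |B| = |M| + 1 memory states. -/
open scoped Classical

variable {S A : Type} [Fintype S] [Fintype A]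

/-!
The DRR machine starts deterministically in a fresh memory state, where it plays the
`N.init`-mixture of `N.next` and whose update is `N`'s Bayesian posterior after the first step.
From then on it only visits the copy of `N`'s memory, so its belief after any nonempty word is
`N`'s belief padded by a zero. Both machines therefore induce literally the same strategy.
-/

noncomputable def liftDist {n : ℕ} (μ : Fin n → ℝ) : Fin (n + 1) → ℝ :=
  Fin.lastCases 0 μ

@[simp] lemma liftDist_castSucc {n : ℕ} (μ : Fin n → ℝ) (m : Fin n) :
    liftDist μ m.castSucc = μ m := by
  simp [liftDist]

@[simp] lemma liftDist_last {n : ℕ} (μ : Fin n → ℝ) : liftDist μ (Fin.last n) = 0 := by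
  simp [liftDist]

lemma sum_liftDist_mul {n : ℕ} (μ : Fin n → ℝ) (f : Fin (n + 1) → ℝ) :
    ∑ m, liftDist μ m * f m = ∑ m, μ m * f m.castSucc := by
  simp [Fin.sum_univ_castSucc]

lemma sum_liftDist {n : ℕ} (μ : Fin n → ℝ) : ∑ m, liftDist μ m = ∑ m, μ m := by
  simp [Fin.sum_univ_castSucc]

section StepDist

variable (G : Game S A) {n : ℕ} (N : Mealy n S A)

lemma stepDist_nonneg (hnext : ∀ m s a, 0 ≤ N.next m s a) (hup : ∀ m s a m', 0 ≤ N.up m s a m')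
    {μ : Fin n → ℝ} (hμ : ∀ m, 0 ≤ μ m) (s : S) (a : A) (m : Fin n) :
    0 ≤ stepDist G N μ s a m := by
  unfold stepDist
  split_ifs
  · exact div_nonneg
      (Finset.sum_nonneg fun m' _ => mul_nonneg (mul_nonneg (hμ m') (hup m' s a m)) (hnext m' s a))
      (Finset.sum_nonneg fun m' _ => mul_nonneg (hμ m') (hnext m' s a))
  · exact Finset.sum_nonneg fun m' _ => mul_nonneg (hμ m') (hup m' s a m)

lemma sum_stepDist (hup : ∀ m s a, ∑ m', N.up m s a m' = 1) {μ : Fin n → ℝ}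
    (hμ : ∑ m, μ m = 1) (s : S) (a : A) : ∑ m, stepDist G N μ s a m = 1 := by
  unfold stepDist
  split_ifs with h
  · rw [← Finset.sum_div, div_eq_one_iff_eq h.2, Finset.sum_comm]
    simp_rw [mul_right_comm _ _ (N.next _ s a), ← Finset.mul_sum, hup, mul_one]
  · rw [Finset.sum_comm]
    simp_rw [← Finset.mul_sum, hup, mul_one, hμ]

end StepDist

section FreshInit

variable (G : Game S A) {n : ℕ} (N : Mealy n S A)

/-- Memory `Fin.last n` is the fresh initial state `b_init`; `m.castSucc` is a copy of `m`. -/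
noncomputable def freshInitMealy : Mealy (n + 1) S A where
  init m := if m = Fin.last n then 1 else 0
  next := Fin.lastCases (fun s a => ∑ m, N.init m * N.next m s a) N.next
  up := Fin.lastCases (fun s a => liftDist (stepDist G N N.init s a))
    (fun m s a => liftDist (N.up m s a))

@[simp] lemma freshInitMealy_next_last (s : S) (a : A) :
    (freshInitMealy G N).next (Fin.last n) s a = ∑ m, N.init m * N.next m s a := by
  simp [freshInitMealy]

@[simp] lemma freshInitMealy_next_castSucc (m : Fin n) (s : S) (a : A) :
    (freshInitMealy G N).next m.castSucc s a = N.next m s a := by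
  simp [freshInitMealy]

@[simp] lemma freshInitMealy_up_last (s : S) (a : A) :
    (freshInitMealy G N).up (Fin.last n) s a = liftDist (stepDist G N N.init s a) := by
  simp [freshInitMealy]

@[simp] lemma freshInitMealy_up_castSucc (m : Fin n) (s : S) (a : A) :
    (freshInitMealy G N).up m.castSucc s a = liftDist (N.up m s a) := by
  simp [freshInitMealy]

lemma sum_freshInitMealy_init_mul (f : Fin (n + 1) → ℝ) :
    ∑ m, (freshInitMealy G N).init m * f m = f (Fin.last n) := by
  simp [freshInitMealy]

lemma detInit_freshInitMealy : DetInit (freshInitMealy G N) :=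
  ⟨Fin.last n, fun _ => by simp [freshInitMealy]⟩

lemma stepDist_freshInitMealy_liftDist (μ : Fin n → ℝ) (s : S) (a : A) :
    stepDist G (freshInitMealy G N) (liftDist μ) s a = liftDist (stepDist G N μ s a) := by
  funext m
  induction m using Fin.lastCases <;>
    simp [stepDist, Fin.sum_univ_castSucc] <;> split_ifs <;> simp

lemma stepDist_freshInitMealy_init (s : S) (a : A) :
    stepDist G (freshInitMealy G N) (freshInitMealy G N).init s a
      = liftDist (stepDist G N N.init s a) := by
  -- At a Player-1 state the Bayesian numerator is the fresh state's posterior times the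
  -- normalising constant `∑ m, N.init m * N.next m s a`, which then cancels.
  funext m
  induction m using Fin.lastCases <;>
    simp [stepDist, mul_assoc, sum_freshInitMealy_init_mul] <;> split_ifs <;> simp_all

lemma properMealy_freshInitMealy (hN : ProperMealy N) : ProperMealy (freshInitMealy G N) := by
  obtain ⟨hinit, hinit_sum, hnext, hnext_sum, hup, hup_sum⟩ := hN
  refine ⟨fun m => ?_, by simp [freshInitMealy], fun m s a => ?_, fun m s => ?_,
    fun m s a m' => ?_, fun m s a => ?_⟩
  · simp only [freshInitMealy]; split_ifs <;> norm_num
  · induction m using Fin.lastCases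
    · simpa using Finset.sum_nonneg fun m' _ => mul_nonneg (hinit m') (hnext m' s a)
    · simpa using hnext _ s a
  · induction m using Fin.lastCases
    · simp_rw [freshInitMealy_next_last, Finset.sum_comm (γ := A), ← Finset.mul_sum, hnext_sum,
        mul_one, hinit_sum]
    · simpa using hnext_sum _ s
  · induction m using Fin.lastCases <;> induction m' using Fin.lastCases <;>
      simp [stepDist_nonneg G N hnext hup hinit, hup]
  · induction m using Fin.lastCases <;>
      simp [sum_liftDist, sum_stepDist G N hup_sum hinit_sum, hup_sum]

lemma foldl_stepDist_freshInitMealy (w : List (S × A)) (μ : Fin n → ℝ) :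
    w.foldl (fun ν p => stepDist G (freshInitMealy G N) ν p.1 p.2) (liftDist μ)
      = liftDist (w.foldl (fun ν p => stepDist G N ν p.1 p.2) μ) := by
  induction w generalizing μ with
  | nil => rfl
  | cons p w ih => simp only [List.foldl_cons, stepDist_freshInitMealy_liftDist, ih]

lemma memDist_freshInitMealy_cons (p : S × A) (w : List (S × A)) :
    memDist G (freshInitMealy G N) (p :: w) = liftDist (memDist G N (p :: w)) := by
  simp only [memDist, List.foldl_cons, stepDist_freshInitMealy_init, foldl_stepDist_freshInitMealy]

lemma mealyStrat_freshInitMealy : mealyStrat G (freshInitMealy G N) = mealyStrat G N := by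
  funext w s a
  cases w with
  | nil => simp [mealyStrat, memDist, sum_freshInitMealy_init_mul]
  | cons p w => simp [mealyStrat, memDist_freshInitMealy_cons, sum_liftDist_mul]

end FreshInit

/-- Every RRR strategy (fully randomised Mealy machine) admits an
outcome-equivalent DRR strategy (deterministic initialisation, randomised
outputs and updates) with exactly `|M| + 1` memory states. -/
theorem rrr_eq_drr (S A : Type) [Fintype S] [Fintype A]
    (G : Game S A) (n : ℕ) (N : Mealy n S A) (hN : ProperMealy N) :
    ∃ B : Mealy (n + 1) S A, ProperMealy B ∧ DetInit B ∧
      OutcomeEquiv G (mealyStrat G N) (mealyStrat G B) := by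
  refine ⟨freshInitMealy G N, properMealy_freshInitMealy G N hN, detInit_freshInitMealy G N, ?_⟩
  rw [mealyStrat_freshInitMealy]
  exact fun _ _ _ _ => rfl
end

section
/- Fix a memory state m of a stochastic Mealy machine and a linear order on the action set A. For s ∈ S_i and a ∈ A, let I(m, s, a) be the set of indices j such that the memoryless strategy σ^m_j (defined via cumulative probabilities of α_next(m, s)) prescribes a in s. Then Σ_{j ∈ I(m,s,a)} (x^m_{j+1} − x^m_j) = α_next(m, s)(a). -/
open scoped Classical

/-- Cumulative probability of the actions strictly below `a` under `α s`. -/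
noncomputable def cumLT {S A : Type} [Fintype A] [LinearOrder A]
    (α : S → A → ℝ) (s : S) (a : A) : ℝ :=
  ∑ a' ∈ Finset.univ.filter (· < a), α s a'

/-- Cumulative probability of the actions up to and including `a` under `α s`. -/
noncomputable def cumLE {S A : Type} [Fintype A] [LinearOrder A]
    (α : S → A → ℝ) (s : S) (a : A) : ℝ :=
  ∑ a' ∈ Finset.univ.filter (· ≤ a), α s a'

/-- The increasing enumeration `x_1 < ... < x_ℓ` of the cumulative values
`Σ_{a' < a} α s a'` (over all `s, a`) that are `< 1`. -/
noncomputable def cutList {S A : Type} [Fintype S] [Fintype A] [LinearOrder A]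
    (α : S → A → ℝ) : List ℝ :=
  Finset.sort
    ((Finset.univ.image fun p : S × A => cumLT α p.1 p.2).filter (· < 1)) (· ≤ ·)

/-- The `j`-th cut point (0-based); beyond the list, the value is `1`
(this realises `x_{ℓ+1} = 1`). -/
noncomputable def xval {S A : Type} [Fintype S] [Fintype A] [LinearOrder A]
    (α : S → A → ℝ) (j : ℕ) : ℝ :=
  (cutList α).getD j 1

/-!
Clamping the cut points to `[cumLT α s a, cumLE α s a]` turns the sum into a telescoping one.
This works because both endpoints are themselves cut points (or `1 = x_ℓ`): `cumLT α s a` by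
definition, and `cumLE α s a` because it equals `cumLT α s b` for the successor `b` of `a`, or
is the total mass `1` when `a` is maximal.
-/

open Finset

section Telescoping

variable {α : Type*} [AddCommGroup α] [LinearOrder α] {f : ℕ → α}

/-- Since the clamping bounds are values of `f`, a step starting below `f k₀` (resp. inside
`[f k₀, f k₁)`) ends at most at `f k₀` (resp. `f k₁`). -/
lemma Monotone.clamp_succ_sub_clamp (hf : Monotone f) (k₀ k₁ j : ℕ) :
    max (f k₀) (min (f k₁) (f (j + 1))) - max (f k₀) (min (f k₁) (f j)) =
      if f k₀ ≤ f j ∧ f j < f k₁ then f (j + 1) - f j else 0 := by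
  have hstep : f j ≤ f (j + 1) := hf j.le_succ
  have below_of_lt {k : ℕ} (h : f j < f k) : f (j + 1) ≤ f k :=
    hf (Nat.succ_le_of_lt (hf.reflect_lt h))
  split_ifs with h
  · obtain ⟨hlo, hhi⟩ := h
    have := below_of_lt hhi
    rw [min_eq_right this, min_eq_right hhi.le, max_eq_right (hlo.trans hstep), max_eq_right hlo]
  · rcases lt_or_ge (f j) (f k₀) with hlo | hlo
    · have := below_of_lt hlo
      rw [max_eq_left ((min_le_right _ _).trans this), max_eq_left ((min_le_right _ _).trans hlo.le),
        sub_self]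
    · have hhi : f k₁ ≤ f j := not_lt.mp fun h' => h ⟨hlo, h'⟩
      rw [min_eq_left hhi, min_eq_left (hhi.trans hstep), sub_self]

lemma Monotone.sum_filter_sub_eq (hf : Monotone f) {k₀ k₁ n : ℕ} (hk : f k₀ ≤ f k₁)
    (hn : f k₁ ≤ f n) :
    ∑ j ∈ (range n).filter (fun j => f k₀ ≤ f j ∧ f j < f k₁), (f (j + 1) - f j) =
      f k₁ - f k₀ := by
  rw [sum_filter, ← sum_congr rfl fun j _ => hf.clamp_succ_sub_clamp k₀ k₁ j,
    sum_range_sub (fun j => max (f k₀) (min (f k₁) (f j))), min_eq_left hn, max_eq_right hk,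
    min_eq_right (hf (Nat.zero_le k₁)), max_eq_left (hf (Nat.zero_le k₀))]

end Telescoping

section CutPoints

variable {S A : Type} [Fintype S] [Fintype A] [LinearOrder A] {α : S → A → ℝ}

lemma lt_one_of_mem_cutList {x : ℝ} (hx : x ∈ cutList α) : x < 1 := by
  rw [cutList, mem_sort] at hx
  exact (mem_filter.mp hx).2

lemma cumLT_mem_cutList {s : S} {a : A} (h : cumLT α s a < 1) : cumLT α s a ∈ cutList α := by
  rw [cutList, mem_sort, mem_filter]
  exact ⟨mem_image.mpr ⟨(s, a), mem_univ _, rfl⟩, h⟩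

lemma xval_le_one (j : ℕ) : xval α j ≤ 1 := by
  rw [xval]
  by_cases hj : j < (cutList α).length
  · rw [List.getD_eq_getElem _ _ hj]
    exact (lt_one_of_mem_cutList (List.getElem_mem hj)).le
  · rw [List.getD_eq_default _ _ (not_lt.mp hj)]

lemma xval_length : xval α (cutList α).length = 1 :=
  List.getD_eq_default _ _ le_rfl

lemma xval_mono : Monotone (xval α) := by
  refine monotone_nat_of_le_succ fun j => ?_
  by_cases hj : j + 1 < (cutList α).length
  · rw [xval, xval, List.getD_eq_getElem _ _ hj, List.getD_eq_getElem _ _ (by omega)]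
    exact (pairwise_sort _ _).rel_get_of_lt
      (show (⟨j, by omega⟩ : Fin (cutList α).length) < ⟨j + 1, hj⟩ from j.lt_succ_self)
  · rw [xval.eq_def (j := j + 1), List.getD_eq_default _ _ (not_lt.mp hj)]
    exact xval_le_one j

lemma exists_xval_eq_of_mem {x : ℝ} (hx : x ∈ cutList α) : ∃ k, xval α k = x := by
  obtain ⟨k, hk⟩ := List.mem_iff_get.mp hx
  exact ⟨k, by rw [xval, List.getD_eq_getElem _ _ k.isLt, ← hk, List.get_eq_getElem]⟩

lemma exists_xval_eq_cumLT {s : S} {a : A} (h : cumLT α s a ≤ 1) :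
    ∃ k, xval α k = cumLT α s a := by
  rcases h.lt_or_eq with h | h
  · exact exists_xval_eq_of_mem (cumLT_mem_cutList h)
  · exact ⟨_, xval_length.trans h.symm⟩

end CutPoints

section Cumulative

variable {S A : Type} [Fintype A] [LinearOrder A] {α : S → A → ℝ}

lemma cumLE_eq_cumLT_add (s : S) (a : A) : cumLE α s a = cumLT α s a + α s a := by
  have hfilter : univ.filter (· ≤ a) = insert a (univ.filter (· < a)) := by
    ext b
    simp [le_iff_lt_or_eq, or_comm]
  rw [cumLE, cumLT, hfilter, sum_insert (by simp), add_comm]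

lemma cumLE_le_one (hpos : ∀ s a, 0 ≤ α s a) (hsum : ∀ s, ∑ a, α s a = 1) (s : S) (a : A) :
    cumLE α s a ≤ 1 :=
  hsum s ▸ sum_le_sum_of_subset_of_nonneg (filter_subset _ _) fun b _ _ => hpos s b

lemma cumLE_eq_cumLT_of_covBy {s : S} {a b : A} (hab : a ⋖ b) : cumLE α s a = cumLT α s b := by
  rw [cumLE, cumLT]
  congr 1
  ext c
  simp only [mem_filter, mem_univ, true_and, hab.lt_iff_le_left]

lemma cumLE_eq_one_of_isMax (hsum : ∀ s, ∑ a, α s a = 1) {s : S} {a : A} (ha : IsMax a) :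
    cumLE α s a = 1 := by
  rw [cumLE, filter_true_of_mem fun b _ => not_lt.mp fun h => ha.not_lt h, hsum]

end Cumulative

/-- The filter condition is "`σ_j` prescribes `a` at `s`". -/
theorem interval_lengths_sum (S A : Type) [Fintype S] [Fintype A] [LinearOrder A]
    (α : S → A → ℝ) (hpos : ∀ s a, 0 ≤ α s a) (hsum : ∀ s, ∑ a, α s a = 1)
    (s : S) (a : A) :
    ∑ j ∈ (Finset.range (cutList α).length).filter
        (fun j => cumLT α s a ≤ xval α j ∧ xval α j < cumLE α s a),
      (xval α (j + 1) - xval α j) = α s a := by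
  have hlt_le : cumLT α s a ≤ cumLE α s a := by
    rw [cumLE_eq_cumLT_add]
    linarith [hpos s a]
  have hle_one := cumLE_le_one hpos hsum s a
  obtain ⟨k₀, hk₀⟩ := exists_xval_eq_cumLT (hlt_le.trans hle_one)
  obtain ⟨k₁, hk₁⟩ : ∃ k, xval α k = cumLE α s a := by
    by_cases ha : IsMax a
    · exact ⟨_, xval_length.trans (cumLE_eq_one_of_isMax hsum ha).symm⟩
    · obtain ⟨c, hac⟩ := not_isMax_iff.mp ha
      obtain ⟨b, hab, -⟩ := exists_covBy_le_of_lt hac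
      rw [cumLE_eq_cumLT_of_covBy hab] at hle_one ⊢
      exact exists_xval_eq_cumLT hle_one
  rw [← hk₀, ← hk₁, xval_mono.sum_filter_sub_eq (hk₀.trans_le (hlt_le.trans hk₁.ge))
    (hk₁.trans_le (hle_one.trans_eq xval_length.symm)), hk₀, hk₁, cumLE_eq_cumLT_add,
    add_sub_cancel_left]
end

section
/- In the Markov chain induced by a stochastic Mealy machine M of Player 1, an opposing strategy σ2, and an initial state, the conditional distribution over memory states given the observed word satisfies: for w = w' s_k a_k consistent and s_k ∈ S_1, μ_w(m) = [Σ_{m'} μ_{w'}(m') · α_up(m', s_k, a_k)(m) · α_next(m', s_k)(a_k)] / [Σ_{m'} μ_{w'}(m') · α_next(m', s_k)(a_k)], and for s_k ∈ S_2, μ_w(m) = Σ_{m'} μ_{w'}(m') · α_up(m', s_k, a_k)(m). In particular, μ_w does not depend on σ2. -/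
/-!
Summing the trajectory probability over the memory sequence factorises the last step: writing
`u_w(m) = P(M = m, W = w)`, one has
`u_{w(s,a)}(m) = P(arrive at s | w) * ∑ m', u_w(m') * P(a | m', s) * α_up(m', s, a)(m)`,
where `P(a | m', s)` is `α_next(m', s)(a)` at Player-1 states and `σ2(w, s)(a)`, which does not
depend on `m'`, at Player-2 states. The word probability is the sum of this over `m`, so in
`μ_{w(s,a)} = u_{w(s,a)} / P(W = w(s,a))` the arrival factor cancels, and at Player-2 states so
does `σ2(w, s)(a)`. Thus `μ_{w(s,a)}` is the Bayesian update `stepDist` of `μ_w`, and by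
induction `μ_w` is the machine's own belief `memDist w`, in which `σ2` does not occur.
-/

open scoped Classical

variable {S A : Type} [Fintype S] [Fintype A]

/-- Probability of a finite trajectory (a sequence of triples
`(state, memory, action)`) in the Markov chain induced by the Mealy machine
`N`, the opposing strategy `σ2` and the initial state `s0`. -/
noncomputable def jointProb (G : Game S A) {n : ℕ} (N : Mealy n S A)
    (σ2 : List (S × A) → S → A → ℝ) (s0 : S) (ts : List (S × Fin n × A)) : ℝ :=
  (ts.foldl
    (fun (acc : ℝ × Option (S × Fin n × A) × List (S × A)) (t : S × Fin n × A) =>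
      (acc.1 *
        (match acc.2.1 with
          | none => (if t.1 = s0 then (1 : ℝ) else 0) * N.init t.2.1
          | some u => G.delta u.1 u.2.2 t.1 * N.up u.2.1 u.1 u.2.2 t.2.1) *
        (if G.P1 t.1 then N.next t.2.1 t.1 t.2.2 else σ2 acc.2.2 t.1 t.2.2),
       some t, acc.2.2 ++ [(t.1, t.2.2)]))
    ((1 : ℝ), (none : Option (S × Fin n × A)), ([] : List (S × A)))).1

/-- Trajectory obtained by interleaving the word `w` with memory states `ms`. -/
def mkTraj {n : ℕ} (w : List (S × A)) (ms : Fin w.length → Fin n) :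
    List (S × Fin n × A) :=
  List.ofFn fun i : Fin w.length => ((w.get i).1, ms i, (w.get i).2)

/-- `P(W_{k+1} = w)`: probability that the observed word is `w`. -/
noncomputable def wordProb (G : Game S A) {n : ℕ} (N : Mealy n S A)
    (σ2 : List (S × A) → S → A → ℝ) (s0 : S) (w : List (S × A)) : ℝ :=
  ∑ ms : Fin w.length → Fin n, jointProb G N σ2 s0 (mkTraj w ms)

/-- `P(M_{k+1} = m ∧ W_{k+1} = w)`: the memory after `w` is obtained by one
more update from the memory along the trajectory. -/
noncomputable def memNumer (G : Game S A) {n : ℕ} (N : Mealy n S A)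
    (σ2 : List (S × A) → S → A → ℝ) (s0 : S) (w : List (S × A)) (m : Fin n) : ℝ :=
  if h : w.length = 0 then N.init m
  else
    ∑ ms : Fin w.length → Fin n,
      jointProb G N σ2 s0 (mkTraj w ms) *
        N.up (ms ⟨w.length - 1, Nat.sub_lt (Nat.pos_of_ne_zero h) Nat.one_pos⟩)
          (w.get ⟨w.length - 1, Nat.sub_lt (Nat.pos_of_ne_zero h) Nat.one_pos⟩).1
          (w.get ⟨w.length - 1, Nat.sub_lt (Nat.pos_of_ne_zero h) Nat.one_pos⟩).2 m

/-- `μ_w(m) = P(M_{k+1} = m | W_{k+1} = w)`, the conditional distribution over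
memory states given the observed word. -/
noncomputable def condMem (G : Game S A) {n : ℕ} (N : Mealy n S A)
    (σ2 : List (S × A) → S → A → ℝ) (s0 : S) (w : List (S × A)) (m : Fin n) : ℝ :=
  memNumer G N σ2 s0 w m / wordProb G N σ2 s0 w

set_option linter.unusedSectionVars false

noncomputable def transProb (G : Game S A) {n : ℕ} (N : Mealy n S A) (s0 : S) :
    Option (S × Fin n × A) → S × Fin n × A → ℝ
  | none, t => (if t.1 = s0 then 1 else 0) * N.init t.2.1
  | some u, t => G.delta u.1 u.2.2 t.1 * N.up u.2.1 u.1 u.2.2 t.2.1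

def actionProb (G : Game S A) {n : ℕ} (N : Mealy n S A) (σ2 : List (S × A) → S → A → ℝ)
    (w : List (S × A)) (s : S) (m : Fin n) (a : A) : ℝ :=
  if G.P1 s then N.next m s a else σ2 w s a

def trajWord {n : ℕ} (ts : List (S × Fin n × A)) : List (S × A) := ts.map fun t => (t.1, t.2.2)

noncomputable def jointStep (G : Game S A) {n : ℕ} (N : Mealy n S A)
    (σ2 : List (S × A) → S → A → ℝ) (s0 : S)
    (acc : ℝ × Option (S × Fin n × A) × List (S × A)) (t : S × Fin n × A) :
    ℝ × Option (S × Fin n × A) × List (S × A) :=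
  (acc.1 * transProb G N s0 acc.2.1 t * actionProb G N σ2 acc.2.2 t.1 t.2.1 t.2.2,
    some t, acc.2.2 ++ [(t.1, t.2.2)])

noncomputable def arrivalProb (G : Game S A) (s0 : S) (w : List (S × A)) (s : S) : ℝ :=
  match w.getLast? with
  | none => if s = s0 then 1 else 0
  | some q => G.delta q.1 q.2 s

section MemoryBelief

variable {G : Game S A} {n : ℕ} {N : Mealy n S A} {σ2 : List (S × A) → S → A → ℝ}
  {s0 : S}

theorem jointProb_eq_foldl_jointStep (ts : List (S × Fin n × A)) :
    jointProb G N σ2 s0 ts = (ts.foldl (jointStep G N σ2 s0) (1, none, [])).1 := by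
  unfold jointProb
  congr 2
  funext acc t
  rcases acc with ⟨x, _ | u, l⟩ <;> rfl

theorem foldl_jointStep (ts : List (S × Fin n × A)) :
    ts.foldl (jointStep G N σ2 s0) (1, none, []) =
      (jointProb G N σ2 s0 ts, ts.getLast?, trajWord ts) := by
  induction ts using List.reverseRecOn with
  | nil => rfl
  | append_singleton ts t ih =>
    rw [List.foldl_append, ih, jointProb_eq_foldl_jointStep (ts ++ [t]), List.foldl_append, ih]
    simp [jointStep, trajWord]

theorem jointProb_nil : jointProb G N σ2 s0 [] = 1 := rfl

theorem jointProb_concat (ts : List (S × Fin n × A)) (t : S × Fin n × A) :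
    jointProb G N σ2 s0 (ts ++ [t]) =
      jointProb G N σ2 s0 ts * transProb G N s0 ts.getLast? t *
        actionProb G N σ2 (trajWord ts) t.1 t.2.1 t.2.2 := by
  rw [jointProb_eq_foldl_jointStep, List.foldl_append, foldl_jointStep]
  rfl

theorem trajWord_mkTraj (w : List (S × A)) (ms : Fin w.length → Fin n) :
    trajWord (mkTraj w ms) = w := by
  simp [trajWord, mkTraj, List.map_ofFn, Function.comp_def]

theorem getLast?_mkTraj (w : List (S × A)) (hw : w.length ≠ 0) (ms : Fin w.length → Fin n) :
    (mkTraj w ms).getLast? =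
      some ((w.get ⟨w.length - 1, by omega⟩).1, ms ⟨w.length - 1, by omega⟩,
        (w.get ⟨w.length - 1, by omega⟩).2) := by
  simp [mkTraj, List.getLast?_eq_getElem?, Nat.pos_of_ne_zero hw]

def memSnoc {α β : Type*} (w : List α) (p : α) (ms : Fin w.length → β) (b : β) :
    Fin (w ++ [p]).length → β :=
  fun i => Fin.snoc (α := fun _ => β) ms b (i.cast (by simp))

theorem sum_memSnoc {α β : Type*} [Fintype β] (w : List α) (p : α)
    (f : (Fin (w ++ [p]).length → β) → ℝ) :
    ∑ ms, f ms = ∑ ms : Fin w.length → β, ∑ b, f (memSnoc w p ms b) := by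
  rw [← (Equiv.arrowCongr (finCongr (by simp : w.length + 1 = (w ++ [p]).length))
    (Equiv.refl β)).sum_comp, ← (Fin.snocEquiv fun _ => β).sum_comp, Fintype.sum_prod_type,
    Finset.sum_comm]
  rfl

theorem memSnoc_last {α β : Type*} (w : List α) (p : α) (ms : Fin w.length → β) (b : β) :
    memSnoc w p ms b ⟨(w ++ [p]).length - 1, by simp⟩ = b := by
  simp [memSnoc, Fin.snoc]

theorem mkTraj_concat (w : List (S × A)) (p : S × A) (ms : Fin w.length → Fin n) (m : Fin n) :
    mkTraj (w ++ [p]) (memSnoc w p ms m) = mkTraj w ms ++ [(p.1, m, p.2)] := by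
  rw [mkTraj, List.ofFn_congr (by simp : (w ++ [p]).length = w.length + 1), List.ofFn_succ_last]
  simp [mkTraj, memSnoc, List.getElem_append_left]

theorem sum_jointProb_mul_transProb (w : List (S × A)) (t : S × Fin n × A) :
    ∑ ms : Fin w.length → Fin n,
        jointProb G N σ2 s0 (mkTraj w ms) * transProb G N s0 (mkTraj w ms).getLast? t =
      arrivalProb G s0 w t.1 * memNumer G N σ2 s0 w t.2.1 := by
  by_cases hw : w.length = 0
  · obtain rfl := List.length_eq_zero_iff.mp hw
    simp [mkTraj, jointProb_nil, transProb, arrivalProb, memNumer]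
  · have hlast : w.getLast? = some (w.get ⟨w.length - 1, by omega⟩) := by
      simp [List.getLast?_eq_getElem?, Nat.pos_of_ne_zero hw]
    simp only [getLast?_mkTraj w hw, transProb, arrivalProb, hlast, memNumer, dif_neg hw,
      Finset.mul_sum]
    exact Finset.sum_congr rfl fun _ _ => by ring

theorem sum_jointProb_mkTraj_concat (w : List (S × A)) (s : S) (m : Fin n) (a : A) :
    ∑ ms : Fin w.length → Fin n, jointProb G N σ2 s0 (mkTraj w ms ++ [(s, m, a)]) =
      arrivalProb G s0 w s * memNumer G N σ2 s0 w m * actionProb G N σ2 w s m a := by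
  simp_rw [jointProb_concat, trajWord_mkTraj, ← Finset.sum_mul]
  rw [sum_jointProb_mul_transProb]

theorem memNumer_concat (w : List (S × A)) (s : S) (a : A) (m : Fin n) :
    memNumer G N σ2 s0 (w ++ [(s, a)]) m =
      arrivalProb G s0 w s *
        ∑ m', memNumer G N σ2 s0 w m' * actionProb G N σ2 w s m' a * N.up m' s a m := by
  have hlast : (w ++ [(s, a)]).get ⟨(w ++ [(s, a)]).length - 1, by simp⟩ = (s, a) := by simp
  rw [memNumer, dif_neg (by simp), sum_memSnoc]
  simp only [memSnoc_last, hlast, mkTraj_concat]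
  rw [Finset.sum_comm]
  simp_rw [← Finset.sum_mul, sum_jointProb_mkTraj_concat, Finset.mul_sum]
  exact Finset.sum_congr rfl fun _ _ => by ring

theorem transProb_nonneg (hN : ProperMealy N) (last : Option (S × Fin n × A))
    (t : S × Fin n × A) : 0 ≤ transProb G N s0 last t := by
  cases last with
  | none => exact mul_nonneg (by positivity) (hN.1 _)
  | some u => exact mul_nonneg (G.delta_nonneg _ _ _) (hN.2.2.2.2.1 _ _ _ _)

theorem actionProb_nonneg (hN : ProperMealy N) (hσ2 : IsStrategy σ2) (w : List (S × A)) (s : S)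
    (m : Fin n) (a : A) : 0 ≤ actionProb G N σ2 w s m a := by
  unfold actionProb
  split
  · exact hN.2.2.1 _ _ _
  · exact hσ2.1 _ _ _

theorem jointProb_nonneg (hN : ProperMealy N) (hσ2 : IsStrategy σ2)
    (ts : List (S × Fin n × A)) : 0 ≤ jointProb G N σ2 s0 ts := by
  induction ts using List.reverseRecOn with
  | nil => rw [jointProb_nil]; exact zero_le_one
  | append_singleton ts t ih =>
    rw [jointProb_concat]
    exact mul_nonneg (mul_nonneg ih (transProb_nonneg hN _ _)) (actionProb_nonneg hN hσ2 _ _ _ _)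

theorem memNumer_nonneg (hN : ProperMealy N) (hσ2 : IsStrategy σ2) (w : List (S × A))
    (m : Fin n) : 0 ≤ memNumer G N σ2 s0 w m := by
  unfold memNumer
  split
  · exact hN.1 m
  · exact Finset.sum_nonneg fun _ _ =>
      mul_nonneg (jointProb_nonneg hN hσ2 _) (hN.2.2.2.2.1 _ _ _ _)

theorem wordProb_nil : wordProb G N σ2 s0 [] = 1 := by
  simp [wordProb, mkTraj, jointProb_nil]

theorem wordProb_eq_sum_memNumer (hN : ProperMealy N) (w : List (S × A)) :
    wordProb G N σ2 s0 w = ∑ m, memNumer G N σ2 s0 w m := by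
  by_cases hw : w.length = 0
  · obtain rfl := List.length_eq_zero_iff.mp hw
    simp [wordProb_nil, memNumer, hN.2.1]
  · simp only [memNumer, dif_neg hw]
    rw [Finset.sum_comm, wordProb]
    simp [← Finset.mul_sum, hN.2.2.2.2.2]

theorem wordProb_concat (hN : ProperMealy N) (w : List (S × A)) (s : S) (a : A) :
    wordProb G N σ2 s0 (w ++ [(s, a)]) =
      arrivalProb G s0 w s * ∑ m', memNumer G N σ2 s0 w m' * actionProb G N σ2 w s m' a := by
  simp_rw [wordProb_eq_sum_memNumer hN, memNumer_concat, ← Finset.mul_sum]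
  rw [Finset.sum_comm]
  simp [← Finset.mul_sum, hN.2.2.2.2.2]

theorem sum_condMem_mul (w : List (S × A)) (f : Fin n → ℝ) :
    ∑ m, condMem G N σ2 s0 w m * f m =
      (∑ m, memNumer G N σ2 s0 w m * f m) / wordProb G N σ2 s0 w := by
  simp only [condMem, Finset.sum_div, div_mul_eq_mul_div]

variable {w : List (S × A)} {s : S} {a : A}

theorem wordProb_ne_zero_of_concat (hN : ProperMealy N) (hσ2 : IsStrategy σ2)
    (h : wordProb G N σ2 s0 (w ++ [(s, a)]) ≠ 0) : wordProb G N σ2 s0 w ≠ 0 := by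
  intro hw
  have hzero : ∀ m, memNumer G N σ2 s0 w m = 0 := fun m =>
    (Finset.sum_eq_zero_iff_of_nonneg fun m _ => memNumer_nonneg hN hσ2 w m).mp
      ((wordProb_eq_sum_memNumer hN w).symm.trans hw) m (Finset.mem_univ m)
  simp [wordProb_concat hN, hzero] at h

theorem sum_condMem (hN : ProperMealy N) (hw : wordProb G N σ2 s0 w ≠ 0) :
    ∑ m, condMem G N σ2 s0 w m = 1 := by
  have h := sum_condMem_mul (G := G) (N := N) (σ2 := σ2) (s0 := s0) w 1
  simp only [Pi.one_apply, mul_one, ← wordProb_eq_sum_memNumer hN] at h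
  rw [h, div_self hw]

theorem condMem_concat (hN : ProperMealy N) (hσ2 : IsStrategy σ2)
    (h : wordProb G N σ2 s0 (w ++ [(s, a)]) ≠ 0) (m : Fin n) :
    condMem G N σ2 s0 (w ++ [(s, a)]) m =
      (∑ m', condMem G N σ2 s0 w m' * actionProb G N σ2 w s m' a * N.up m' s a m) /
        ∑ m', condMem G N σ2 s0 w m' * actionProb G N σ2 w s m' a := by
  have hw := wordProb_ne_zero_of_concat hN hσ2 h
  rw [wordProb_concat hN] at h
  simp_rw [mul_assoc, sum_condMem_mul]
  rw [div_div_div_cancel_right₀ hw, condMem, memNumer_concat, wordProb_concat hN,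
    mul_div_mul_left _ _ (left_ne_zero_of_mul h)]
  simp_rw [mul_assoc]

theorem sum_condMem_mul_actionProb_ne_zero (hN : ProperMealy N) (hσ2 : IsStrategy σ2)
    (h : wordProb G N σ2 s0 (w ++ [(s, a)]) ≠ 0) :
    ∑ m', condMem G N σ2 s0 w m' * actionProb G N σ2 w s m' a ≠ 0 := by
  rw [sum_condMem_mul]
  refine div_ne_zero ?_ (wordProb_ne_zero_of_concat hN hσ2 h)
  rw [wordProb_concat hN] at h
  exact right_ne_zero_of_mul h

theorem condMem_concat_of_P1 (hN : ProperMealy N) (hσ2 : IsStrategy σ2)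
    (h : wordProb G N σ2 s0 (w ++ [(s, a)]) ≠ 0) (hs : G.P1 s = true) (m : Fin n) :
    condMem G N σ2 s0 (w ++ [(s, a)]) m =
      (∑ m', condMem G N σ2 s0 w m' * N.up m' s a m * N.next m' s a) /
        ∑ m', condMem G N σ2 s0 w m' * N.next m' s a := by
  simp only [condMem_concat hN hσ2 h, actionProb, hs, if_true, mul_right_comm _ (N.next _ s a)]

theorem condMem_concat_of_P2 (hN : ProperMealy N) (hσ2 : IsStrategy σ2)
    (h : wordProb G N σ2 s0 (w ++ [(s, a)]) ≠ 0) (hs : G.P1 s = false) (m : Fin n) :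
    condMem G N σ2 s0 (w ++ [(s, a)]) m = ∑ m', condMem G N σ2 s0 w m' * N.up m' s a m := by
  have hden := sum_condMem_mul_actionProb_ne_zero hN hσ2 h
  simp only [actionProb, hs, Bool.false_eq_true, if_false, ← Finset.sum_mul] at hden
  rw [condMem_concat hN hσ2 h]
  simp only [actionProb, hs, Bool.false_eq_true, if_false, mul_right_comm _ (σ2 w s a),
    ← Finset.sum_mul, sum_condMem hN (wordProb_ne_zero_of_concat hN hσ2 h), one_mul]
  exact mul_div_cancel_right₀ _ (right_ne_zero_of_mul hden)

theorem condMem_concat_eq_stepDist (hN : ProperMealy N) (hσ2 : IsStrategy σ2)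
    (h : wordProb G N σ2 s0 (w ++ [(s, a)]) ≠ 0) :
    condMem G N σ2 s0 (w ++ [(s, a)]) = stepDist G N (condMem G N σ2 s0 w) s a := by
  funext m
  cases hs : G.P1 s
  · rw [stepDist, if_neg (by simp [hs]), condMem_concat_of_P2 hN hσ2 h hs]
  · have hden := sum_condMem_mul_actionProb_ne_zero hN hσ2 h
    simp only [actionProb, hs, if_true] at hden
    rw [stepDist, if_pos ⟨hs, hden⟩, condMem_concat_of_P1 hN hσ2 h hs]

theorem condMem_eq_memDist (hN : ProperMealy N) (hσ2 : IsStrategy σ2)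
    (h : wordProb G N σ2 s0 w ≠ 0) : condMem G N σ2 s0 w = memDist G N w := by
  induction w using List.reverseRecOn with
  | nil => funext m; simp [condMem, memNumer, wordProb_nil, memDist]
  | append_singleton w p ih =>
    rw [condMem_concat_eq_stepDist hN hσ2 h, ih (wordProb_ne_zero_of_concat hN hσ2 h), memDist,
      memDist, List.foldl_append]
    rfl

end MemoryBelief

/-- In the induced Markov chain, the conditional distribution over memory
states given the observed word satisfies the stated recursive formulas: at
Player-1 states the update is Bayesian (conditioned on the played action), at
Player-2 states it is the plain mixture; and it does not depend on the
opposing strategy. -/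
theorem condMem_recursion (S A : Type) [Fintype S] [Fintype A]
    (G : Game S A) (n : ℕ) (N : Mealy n S A) (hN : ProperMealy N)
    (σ2 : List (S × A) → S → A → ℝ) (hσ2 : IsStrategy σ2)
    (s0 : S) (w' : List (S × A)) (s : S) (a : A)
    (hpos : 0 < wordProb G N σ2 s0 (w' ++ [(s, a)])) :
    (G.P1 s = true →
      ∀ m, condMem G N σ2 s0 (w' ++ [(s, a)]) m =
        (∑ m', condMem G N σ2 s0 w' m' * N.up m' s a m * N.next m' s a) /
          (∑ m', condMem G N σ2 s0 w' m' * N.next m' s a)) ∧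
    (G.P1 s = false →
      ∀ m, condMem G N σ2 s0 (w' ++ [(s, a)]) m =
        ∑ m', condMem G N σ2 s0 w' m' * N.up m' s a m) ∧
    (∀ σ2', IsStrategy σ2' → 0 < wordProb G N σ2' s0 (w' ++ [(s, a)]) →
      ∀ m, condMem G N σ2 s0 (w' ++ [(s, a)]) m
          = condMem G N σ2' s0 (w' ++ [(s, a)]) m) := by
  refine ⟨condMem_concat_of_P1 hN hσ2 hpos.ne', condMem_concat_of_P2 hN hσ2 hpos.ne',
    fun σ2' hσ2' hpos' m => ?_⟩
  rw [condMem_eq_memDist hN hσ2 hpos.ne', condMem_eq_memDist hN hσ2' hpos'.ne']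
end
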